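/- Let w ∈ ℝ^d with ‖w‖₂² > 1, m ∈ ℝ, λ* = ‖w‖₂²/(‖w‖₂² − 1), δ_SCFE = m·(λ*/(λ* + ‖w‖₂²))·w, and δ_CW = c·w with c = m/‖w‖₂². Then δ_SCFE = δ_CW. -/

import Mathlib

theorem div_sub_one_div_add_self {K : Type*} [Field K] {s : K} (hs : s ≠ 1) :
    s / (s - 1) / (s / (s - 1) + s) = s⁻¹ := by
  rcases eq_or_ne s 0 with rfl | hs₀
  · simp
  have hs₁ : s - 1 ≠ 0 := sub_ne_zero.mpr hs
  rw [div_add' _ _ _ hs₁, div_div_div_cancel_right₀ hs₁, show s + s * (s - 1) = s * s by ring,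
    div_mul_cancel_left₀ hs₀]

/-- With λ* = ‖w‖²/(‖w‖² − 1) and c = m/‖w‖², the SCFE and C&W perturbations coincide. -/
theorem scfe_cw_equiv {d : ℕ} (w : EuclideanSpace ℝ (Fin d)) (m : ℝ)
    (hw : 1 < ‖w‖ ^ 2)
    (lamStar : ℝ) (hlam : lamStar = ‖w‖ ^ 2 / (‖w‖ ^ 2 - 1))
    (c : ℝ) (hc : c = m / ‖w‖ ^ 2) :
    (m * (lamStar / (lamStar + ‖w‖ ^ 2))) • w = c • w := by
  rw [hlam, hc, div_sub_one_div_add_self hw.ne', div_eq_mul_inv]
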